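/- arXiv:2211.11058 — 3 statements merged into one kernel-verified Lean document; each statement's English description precedes it below -/
import Mathlib

section
/- Let H be a Hilbert space, and let A, B be self-adjoint operators on H. Let u be a unit eigenvector of A with eigenvalue λ, and let (w_j)_{j} be an orthonormal basis of H consisting of eigenvectors of B with eigenvalues μ_j, with w_i the eigenvector of interest. If δ := min_{j ≠ i} |μ_j − λ| > 0, then ‖u − ⟨u, w_i⟩ w_i‖ ≤ ‖B u − A u‖ / δ. -/
open scoped InnerProductSpace

theorem stmt_0
    {H : Type*} [NormedAddCommGroup H] [InnerProductSpace ℝ H] [CompleteSpace H]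
    (A B : H →L[ℝ] H) (hA : IsSelfAdjoint A) (hB : IsSelfAdjoint B)
    {ι : Type*} (w : HilbertBasis ι ℝ H) (μ : ι → ℝ)
    (hw : ∀ j, B (w j) = μ j • w j)
    (u : H) (hu : ‖u‖ = 1) (lam : ℝ) (hAu : A u = lam • u)
    (i : ι) (δ : ℝ) (hδ : 0 < δ) (hgap : ∀ j, j ≠ i → δ ≤ |μ j - lam|) :
    ‖u - ⟪u, w i⟫_ℝ • w i‖ ≤ ‖B u - A u‖ / δ := by
  classical
  set v : H := u - ⟪u, w i⟫_ℝ • w i with hv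
  set r : H := B u - A u with hr
  have hon : ∀ j k : ι, ⟪w j, w k⟫_ℝ = if j = k then 1 else 0 :=
    fun j k => orthonormal_iff_ite.mp w.orthonormal j k
  -- coefficients of v
  have hvc : ∀ j : ι, ⟪v, w j⟫_ℝ = if j = i then 0 else ⟪u, w j⟫_ℝ := by
    intro j
    rw [hv, inner_sub_left, real_inner_smul_left, hon i j]
    by_cases h : j = i
    · subst h; simp
    · have : ¬ (i = j) := fun h' => h h'.symm
      simp [h, this]
  -- coefficients of r
  have hrc : ∀ j : ι, ⟪r, w j⟫_ℝ = (μ j - lam) * ⟪u, w j⟫_ℝ := by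
    intro j
    rw [hr, inner_sub_left, hAu, real_inner_smul_left]
    have hsym := hB.isSymmetric u (w j)
    simp only [ContinuousLinearMap.coe_coe] at hsym
    have : ⟪B u, w j⟫_ℝ = μ j * ⟪u, w j⟫_ℝ := by
      rw [hsym, hw j, real_inner_smul_right]
    rw [this]; ring
  have hvs : HasSum (fun j => ⟪v, w j⟫_ℝ * ⟪w j, v⟫_ℝ) ⟪v, v⟫_ℝ :=
    w.hasSum_inner_mul_inner v v
  have hrs : HasSum (fun j => ⟪r, w j⟫_ℝ * ⟪w j, r⟫_ℝ) ⟪r, r⟫_ℝ :=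
    w.hasSum_inner_mul_inner r r
  have hvs' : HasSum (fun j => δ^2 * (⟪v, w j⟫_ℝ * ⟪w j, v⟫_ℝ)) (δ^2 * ⟪v, v⟫_ℝ) :=
    hvs.mul_left _
  have key : δ^2 * ⟪v, v⟫_ℝ ≤ ⟪r, r⟫_ℝ := by
    refine hasSum_le (fun j => ?_) hvs' hrs
    rw [show ⟪w j, v⟫_ℝ = ⟪v, w j⟫_ℝ from real_inner_comm _ _,
        show ⟪w j, r⟫_ℝ = ⟪r, w j⟫_ℝ from real_inner_comm _ _, hvc j, hrc j]
    by_cases h : j = i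
    · subst h
      simp only [if_pos rfl, eq_self_iff_true, if_true, mul_zero, zero_mul]
      nlinarith [mul_self_nonneg ((μ j - lam) * ⟪u, w j⟫_ℝ)]
    · simp only [h, if_neg, if_false]
      have h1 : δ ≤ |μ j - lam| := hgap j h
      have h2 : δ^2 ≤ (μ j - lam)^2 := by
        calc δ^2 ≤ |μ j - lam|^2 := by
              apply pow_le_pow_left₀ hδ.le h1 2
          _ = (μ j - lam)^2 := sq_abs _
      nlinarith [sq_nonneg (⟪u, w j⟫_ℝ)]
  have hvn : ⟪v, v⟫_ℝ = ‖v‖^2 := real_inner_self_eq_norm_sq v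
  have hrn : ⟪r, r⟫_ℝ = ‖r‖^2 := real_inner_self_eq_norm_sq r
  rw [hvn, hrn] at key
  rw [le_div_iff₀ hδ]
  nlinarith [norm_nonneg v, norm_nonneg r]
end

section
/- Let A and B be real symmetric n×n matrices with spectral decompositions A = Σ_i λ_i u_i u_iᵀ and B = Σ_i μ_i w_i w_iᵀ (orthonormal eigenbases), and let ĥ : ℝ → ℝ be A_h-Lipschitz and bounded by 1. Suppose for all i: |λ_i − μ_i| ≤ δ₁ and there exist signs a_i ∈ {−1,1} with ‖a_i w_i − u_i‖ ≤ δ₂. Then for every unit vector x ∈ ℝⁿ, ‖h(A)x − h(B)x‖ ≤ A_h δ₁ + 2 n δ₂, where h(A)x = Σ_i ĥ(λ_i)⟨x,u_i⟩u_i and h(B)x = Σ_i ĥ(μ_i)⟨x,w_i⟩w_i. -/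
open scoped InnerProductSpace

theorem stmt_16
    {n : ℕ}
    (A B : Matrix (Fin n) (Fin n) ℝ) (hA : A.IsSymm) (hB : B.IsSymm)
    (u w : OrthonormalBasis (Fin n) ℝ (EuclideanSpace ℝ (Fin n)))
    (lam mu : Fin n → ℝ)
    (hEigA : ∀ i, Matrix.toEuclideanLin A (u i) = lam i • u i)
    (hEigB : ∀ i, Matrix.toEuclideanLin B (w i) = mu i • w i)
    (hhat : ℝ → ℝ) (Ah : ℝ)
    (hLip : ∀ a b : ℝ, |hhat a - hhat b| ≤ Ah * |a - b|)
    (hbd : ∀ a : ℝ, |hhat a| ≤ 1)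
    (δ₁ δ₂ : ℝ)
    (hval : ∀ i, |lam i - mu i| ≤ δ₁)
    (a : Fin n → ℝ) (ha : ∀ i, a i = 1 ∨ a i = -1)
    (hvec : ∀ i, ‖a i • w i - u i‖ ≤ δ₂)
    (x : EuclideanSpace ℝ (Fin n)) (hx : ‖x‖ = 1) :
    ‖(∑ i, hhat (lam i) • ⟪x, u i⟫_ℝ • u i) -
        ∑ i, hhat (mu i) • ⟪x, w i⟫_ℝ • w i‖ ≤
      Ah * δ₁ + 2 * n * δ₂ := by
  rcases Nat.eq_zero_or_pos n with hn | hn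
  · exfalso
    have hx0 : x = 0 := by
      subst hn
      exact Subsingleton.elim x 0
    rw [hx0, norm_zero] at hx
    norm_num at hx
  have hδ₁ : 0 ≤ δ₁ := le_trans (abs_nonneg _) (hval ⟨0, hn⟩)
  have hδ₂ : 0 ≤ δ₂ := le_trans (norm_nonneg _) (hvec ⟨0, hn⟩)
  have hAh : 0 ≤ Ah := by
    have h := hLip 0 1
    simp only [zero_sub, abs_neg, abs_one, mul_one] at h
    exact le_trans (abs_nonneg _) h
  -- split
  have hsplit : (∑ i, hhat (lam i) • ⟪x, u i⟫_ℝ • u i) -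
        ∑ i, hhat (mu i) • ⟪x, w i⟫_ℝ • w i
      = (∑ i, ((hhat (lam i) - hhat (mu i)) * ⟪x, u i⟫_ℝ) • u i)
        + ∑ i, hhat (mu i) • (⟪x, u i⟫_ℝ • u i - ⟪x, w i⟫_ℝ • w i) := by
    rw [← Finset.sum_sub_distrib, ← Finset.sum_add_distrib]
    refine Finset.sum_congr rfl fun i _ => ?_
    module
  rw [hsplit]
  have h1 : ‖∑ i, ((hhat (lam i) - hhat (mu i)) * ⟪x, u i⟫_ℝ) • u i‖ ≤ Ah * δ₁ := by
    have hsq : ‖∑ i, ((hhat (lam i) - hhat (mu i)) * ⟪x, u i⟫_ℝ) • u i‖ ^ 2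
        = ∑ i, ((hhat (lam i) - hhat (mu i)) * ⟪x, u i⟫_ℝ) ^ 2 := by
      rw [← real_inner_self_eq_norm_sq]
      rw [u.orthonormal.inner_sum]
      simp [sq]
    have hbound : ∑ i, ((hhat (lam i) - hhat (mu i)) * ⟪x, u i⟫_ℝ) ^ 2
        ≤ (Ah * δ₁) ^ 2 := by
      have hPar : ∑ i, ⟪x, u i⟫_ℝ ^ 2 = 1 := by
        have := u.sum_inner_mul_inner x x
        rw [real_inner_self_eq_norm_sq, hx] at this
        simp only [one_pow] at this
        rw [← this]
        refine Finset.sum_congr rfl fun i _ => ?_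
        rw [sq, real_inner_comm (u i) x]
      calc ∑ i, ((hhat (lam i) - hhat (mu i)) * ⟪x, u i⟫_ℝ) ^ 2
          ≤ ∑ i, (Ah * δ₁) ^ 2 * ⟪x, u i⟫_ℝ ^ 2 := by
            refine Finset.sum_le_sum fun i _ => ?_
            rw [mul_pow]
            refine mul_le_mul_of_nonneg_right ?_ (sq_nonneg _)
            have : |hhat (lam i) - hhat (mu i)| ≤ Ah * δ₁ :=
              le_trans (hLip _ _) (mul_le_mul_of_nonneg_left (hval i) hAh)
            calc (hhat (lam i) - hhat (mu i)) ^ 2 = |hhat (lam i) - hhat (mu i)| ^ 2 := by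
                  rw [sq_abs]
              _ ≤ (Ah * δ₁) ^ 2 := by
                  exact pow_le_pow_left₀ (abs_nonneg _) this 2
        _ = (Ah * δ₁) ^ 2 := by
            rw [← Finset.mul_sum, hPar, mul_one]
    have hfin : ‖∑ i, ((hhat (lam i) - hhat (mu i)) * ⟪x, u i⟫_ℝ) • u i‖ ^ 2 ≤ (Ah * δ₁) ^ 2 :=
      hsq ▸ hbound
    exact (pow_le_pow_iff_left₀ (norm_nonneg _) (by positivity) two_ne_zero).mp hfin
  have h2 : ‖∑ i, hhat (mu i) • (⟪x, u i⟫_ℝ • u i - ⟪x, w i⟫_ℝ • w i)‖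
      ≤ 2 * n * δ₂ := by
    have hterm : ∀ i, ‖hhat (mu i) • (⟪x, u i⟫_ℝ • u i - ⟪x, w i⟫_ℝ • w i)‖ ≤ 2 * δ₂ := by
      intro i
      have ha2 : a i * a i = 1 := by rcases ha i with h | h <;> rw [h] <;> norm_num
      set v := a i • w i with hv
      have hvw : ⟪x, w i⟫_ℝ • w i = ⟪x, v⟫_ℝ • v := by
        rw [hv, real_inner_smul_right, smul_smul, mul_comm (a i), mul_assoc, ha2, mul_one]
      have hnv : ‖v‖ = 1 := by
        rw [hv, norm_smul]
        have : ‖a i‖ = 1 := by rcases ha i with h | h <;> rw [h] <;> norm_num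
        rw [this, one_mul, w.orthonormal.1 i]
      have hd : ‖v - u i‖ ≤ δ₂ := hvec i
      have hdecomp : ⟪x, u i⟫_ℝ • u i - ⟪x, v⟫_ℝ • v
          = ⟪x, u i - v⟫_ℝ • u i + ⟪x, v⟫_ℝ • (u i - v) := by
        rw [inner_sub_right]
        module
      have hbd1 : |⟪x, u i - v⟫_ℝ| ≤ δ₂ := by
        calc |⟪x, u i - v⟫_ℝ| ≤ ‖x‖ * ‖u i - v‖ := abs_real_inner_le_norm _ _
          _ = ‖v - u i‖ := by rw [hx, one_mul, norm_sub_rev]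
          _ ≤ δ₂ := hd
      have hbd2 : |⟪x, v⟫_ℝ| ≤ 1 := by
        calc |⟪x, v⟫_ℝ| ≤ ‖x‖ * ‖v‖ := abs_real_inner_le_norm _ _
          _ = 1 := by rw [hx, hnv, one_mul]
      have hmain : ‖⟪x, u i⟫_ℝ • u i - ⟪x, v⟫_ℝ • v‖ ≤ 2 * δ₂ := by
        rw [hdecomp]
        calc ‖⟪x, u i - v⟫_ℝ • u i + ⟪x, v⟫_ℝ • (u i - v)‖
            ≤ ‖⟪x, u i - v⟫_ℝ • u i‖ + ‖⟪x, v⟫_ℝ • (u i - v)‖ := norm_add_le _ _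
          _ = |⟪x, u i - v⟫_ℝ| * ‖u i‖ + |⟪x, v⟫_ℝ| * ‖u i - v‖ := by
              rw [norm_smul, norm_smul]; rfl
          _ ≤ δ₂ * 1 + 1 * δ₂ := by
              have h1' : ‖u i‖ = 1 := u.orthonormal.1 i
              have h2' : ‖u i - v‖ ≤ δ₂ := by rw [norm_sub_rev]; exact hd
              exact add_le_add (mul_le_mul hbd1 (le_of_eq h1') (norm_nonneg _) hδ₂)
                (mul_le_mul hbd2 h2' (norm_nonneg _) zero_le_one)
          _ = 2 * δ₂ := by ring
      rw [norm_smul, hvw]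
      calc ‖hhat (mu i)‖ * ‖⟪x, u i⟫_ℝ • u i - ⟪x, v⟫_ℝ • v‖
          ≤ 1 * (2 * δ₂) := by
            refine mul_le_mul (hbd _) hmain (norm_nonneg _) zero_le_one
        _ = 2 * δ₂ := one_mul _
    calc ‖∑ i, hhat (mu i) • (⟪x, u i⟫_ℝ • u i - ⟪x, w i⟫_ℝ • w i)‖
        ≤ ∑ i : Fin n, ‖hhat (mu i) • (⟪x, u i⟫_ℝ • u i - ⟪x, w i⟫_ℝ • w i)‖ :=
          norm_sum_le _ _
      _ ≤ ∑ _i : Fin n, 2 * δ₂ := Finset.sum_le_sum fun i _ => hterm i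
      _ = 2 * n * δ₂ := by
          rw [Finset.sum_const, Finset.card_univ, Fintype.card_fin, nsmul_eq_mul]; ring
  calc ‖_ + _‖ ≤ _ + _ := norm_add_le _ _
    _ ≤ Ah * δ₁ + 2 * n * δ₂ := add_le_add h1 h2
end

section
/- Let H be a Hilbert space with orthonormal basis (w_j) of eigenvectors of a self-adjoint operator B with eigenvalues (μ_j), and let u be a unit eigenvector of a self-adjoint operator A with eigenvalue λ. Let Pr⊥ denote the orthogonal projection onto the closed span of {w_j : j ≠ i}. Then ‖Pr⊥(B u) − Pr⊥(A u)‖ ≥ (min_{j ≠ i} |μ_j − λ|) · ‖Pr⊥ u‖. -/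
open scoped InnerProductSpace

/-!
In the coordinates of the Hilbert basis `w`, `Pr` kills the `i`-th coordinate and `B - λ` acts
diagonally by `μ_j - λ`, so the `j`-th coordinate of `Pr (B u) - Pr (A u)` is `(μ_j - λ) ⟪w_j, u⟫`
for `j ≠ i` and `0` for `j = i`. Each coordinate therefore dominates `δ` times the corresponding
coordinate of `Pr u`, and Parseval turns this into the norm inequality.
-/

theorem lp.norm_le_norm_of_forall_norm_le {α : Type*} {E : α → Type*}
    [∀ a, NormedAddCommGroup (E a)] {p : ENNReal} [Fact (1 ≤ p)] (hp : 0 < p.toReal) {f g : lp E p}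
    (h : ∀ a, ‖f a‖ ≤ ‖g a‖) : ‖f‖ ≤ ‖g‖ :=
  (Real.rpow_le_rpow_iff (norm_nonneg f) (norm_nonneg g) hp).1 <|
    hasSum_le (fun a => Real.rpow_le_rpow (norm_nonneg _) (h a) hp.le)
      (lp.hasSum_norm hp f) (lp.hasSum_norm hp g)

namespace HilbertBasis

variable {ι 𝕜 E : Type*} [RCLike 𝕜] [NormedAddCommGroup E] [InnerProductSpace 𝕜 E]
  (b : HilbertBasis ι 𝕜 E)

theorem norm_le_norm_of_forall_norm_repr_le {x y : E} (h : ∀ j, ‖b.repr x j‖ ≤ ‖b.repr y j‖) :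
    ‖x‖ ≤ ‖y‖ := by
  rw [← b.repr.norm_map x, ← b.repr.norm_map y]
  exact lp.norm_le_norm_of_forall_norm_le (by norm_num) h

theorem tsum_repr_smul_ne (v : E) (i : ι) :
    ∑' j : {j // j ≠ i}, b.repr v j • b j = v - b.repr v i • b i := by
  have h : HasSum (fun j : ↑({i}ᶜ : Set ι) => b.repr v j • b j) (v - b.repr v i • b i) :=
    (hasSum_singleton i _).hasSum_iff_compl.1 (b.hasSum_repr v)
  exact h.tsum_eq

theorem repr_sub_repr_smul_self [DecidableEq ι] (v : E) (i j : ι) :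
    b.repr (v - b.repr v i • b i) j = if j = i then 0 else b.repr v j := by
  rw [map_sub, map_smul, b.repr_self, lp.coeFn_sub, lp.coeFn_smul, Pi.sub_apply, Pi.smul_apply,
    lp.single_apply]
  split_ifs with h <;> simp [h]

end HilbertBasis

theorem HilbertBasis.repr_apply_of_isSymmetric {ι E : Type*} [NormedAddCommGroup E]
    [InnerProductSpace ℝ E] {B : E →ₗ[ℝ] E} (hB : B.IsSymmetric) (w : HilbertBasis ι ℝ E)
    {mu : ι → ℝ} (hw : ∀ j, B (w j) = mu j • w j) (v : E) (j : ι) :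
    w.repr (B v) j = mu j * w.repr v j := by
  rw [w.repr_apply_apply, w.repr_apply_apply, ← hB, hw, real_inner_smul_left]

theorem stmt_17_general
    {H : Type*} [NormedAddCommGroup H] [InnerProductSpace ℝ H] [CompleteSpace H]
    (A B : H →L[ℝ] H) (hB : IsSelfAdjoint B)
    (w : HilbertBasis ℕ ℝ H) (mu : ℕ → ℝ) (hw : ∀ j, B (w j) = mu j • w j)
    (u : H) (lam : ℝ) (hAu : A u = lam • u)
    (i : ℕ) (δ : ℝ) (hδ : 0 ≤ δ) (hgap : ∀ j, j ≠ i → δ ≤ |mu j - lam|)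
    (Pr : H → H)
    (hPr : Pr = fun v => ∑' j : {j : ℕ // j ≠ i}, ⟪v, w j⟫_ℝ • (w j : H)) :
    δ * ‖Pr u‖ ≤ ‖Pr (B u) - Pr (A u)‖ := by
  have hPr_apply (v : H) : Pr v = v - w.repr v i • w i := by
    rw [hPr, ← w.tsum_repr_smul_ne]
    simp only [w.repr_apply_apply, real_inner_comm v]
  have hPr_repr (v : H) (j : ℕ) : w.repr (Pr v) j = if j = i then 0 else w.repr v j := by
    rw [hPr_apply, w.repr_sub_repr_smul_self]
  have hBu : ∀ j, w.repr (B u) j = mu j * w.repr u j :=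
    w.repr_apply_of_isSymmetric hB.isSymmetric hw u
  rw [← abs_of_nonneg hδ, ← Real.norm_eq_abs, ← norm_smul]
  refine w.norm_le_norm_of_forall_norm_repr_le fun j => ?_
  simp only [map_smul, map_sub, lp.coeFn_smul, lp.coeFn_sub, Pi.smul_apply, Pi.sub_apply,
    hPr_repr, hAu, hBu, smul_eq_mul]
  split_ifs with hj
  · simp
  · rw [← sub_mul, norm_mul, norm_mul, Real.norm_eq_abs, Real.norm_eq_abs, abs_of_nonneg hδ]
    gcongr
    exact hgap j hj

theorem stmt_17
    {H : Type*} [NormedAddCommGroup H] [InnerProductSpace ℝ H] [CompleteSpace H]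
    (A B : H →L[ℝ] H) (hA : IsSelfAdjoint A) (hB : IsSelfAdjoint B)
    (w : HilbertBasis ℕ ℝ H) (mu : ℕ → ℝ) (hw : ∀ j, B (w j) = mu j • w j)
    (u : H) (hu : ‖u‖ = 1) (lam : ℝ) (hAu : A u = lam • u)
    (i : ℕ) (δ : ℝ) (hδ : 0 ≤ δ) (hgap : ∀ j, j ≠ i → δ ≤ |mu j - lam|)
    (Pr : H → H)
    (hPr : Pr = fun v => ∑' j : {j : ℕ // j ≠ i}, ⟪v, w j⟫_ℝ • (w j : H)) :
    δ * ‖Pr u‖ ≤ ‖Pr (B u) - Pr (A u)‖ :=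
  stmt_17_general A B hB w mu hw u lam hAu i δ hδ hgap Pr hPr
end
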